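/- arXiv:2307.00540 — 7 statements merged into one kernel-verified Lean document; each statement's English description precedes it below -/
import Mathlib

section
/- Distributivity of projection over join (as inclusion): for a set Σ of traces over 𝓔 ∪ 𝓢 and U, W ⊆ 𝓢, we have Σ↾(U ∪ W) ⊆ (Σ↾U) ⋈ (Σ↾W). -/
open Classical

/-- Syntax of LTL formulae over variable type `V`. -/
inductive LTL (V : Type) : Type
  | tt : LTL V
  | var : V → LTL V
  | neg : LTL V → LTL V
  | conj : LTL V → LTL V → LTL V
  | next : LTL V → LTL V
  | untl : LTL V → LTL V → LTL V

namespace LTL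

def rename {V : Type} (f : V → V) : LTL V → LTL V
  | tt => tt
  | var v => var (f v)
  | neg φ => neg (rename f φ)
  | conj φ ψ => conj (rename f φ) (rename f ψ)
  | next φ => next (rename f φ)
  | untl φ ψ => untl (rename f φ) (rename f ψ)

def vars {V : Type} : LTL V → Set V
  | tt => ∅
  | var v => {v}
  | neg φ => vars φ
  | conj φ ψ => vars φ ∪ vars ψ
  | next φ => vars φ
  | untl φ ψ => vars φ ∪ vars ψ

/-- The "always" operator, defined from until. -/
def box {V : Type} (φ : LTL V) : LTL V := neg (untl tt (neg φ))

end LTL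

/-- An (infinite) trace: each state is a set of variables (those true there). -/
abbrev Trace (V : Type) := ℕ → Set V

def Trace.shift {V : Type} (α : Trace V) (k : ℕ) : Trace V := fun i => α (i + k)

/-- Standard LTL satisfaction. -/
def Sat {V : Type} (α : Trace V) : LTL V → Prop
  | .tt => True
  | .var v => v ∈ α 0
  | .neg φ => ¬ Sat α φ
  | .conj φ ψ => Sat α φ ∧ Sat α ψ
  | .next φ => Sat (α.shift 1) φ
  | .untl φ ψ => ∃ k, Sat (α.shift k) ψ ∧ ∀ j < k, Sat (α.shift j) φ

/-- The projection formula `φ′_W`: rename every variable in `W` to its primed copy. -/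
noncomputable def projFormula {V : Type} (prime : V → V) (W : Set V) (φ : LTL V) : LTL V :=
  φ.rename (fun v => if v ∈ W then prime v else v)

/-- Projection of a trace over `E ∪ W`: keep environment variables and variables in `W`. -/
def projT {V : Type} (E W : Set V) (α : Trace V) : Trace V :=
  fun i => (α i ∩ E) ∪ (α i ∩ W)

/-- Projection of a set of traces. -/
def projS {V : Type} (E W : Set V) (Sig : Set (Trace V)) : Set (Trace V) :=
  (projT E W) '' Sig

/-- Natural join of two sets of traces over `E ∪ W₁` and `E ∪ W₂`:
traces over `E ∪ W₁ ∪ W₂` whose projections lie in the respective sets. -/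
def Join {V : Type} (E W₁ W₂ : Set V) (S₁ S₂ : Set (Trace V)) : Set (Trace V) :=
  {α | (∀ i, α i ⊆ E ∪ W₁ ∪ W₂) ∧ projT E W₁ α ∈ S₁ ∧ projT E W₂ α ∈ S₂}

/-- A set of traces is "over `E ∪ W`" if every state of every trace only uses those variables. -/
def TracesOver {V : Type} (E W : Set V) (Sig : Set (Trace V)) : Prop :=
  ∀ α ∈ Sig, ∀ i, α i ⊆ E ∪ W

/-- `Σ_φ`: the set of traces over `E ∪ S` that model `φ`. -/
def ModelsOver {V : Type} (E S : Set V) (φ : LTL V) : Set (Trace V) :=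
  {α | Sat α φ ∧ ∀ i, α i ⊆ E ∪ S}

/-- `W ⊆ S` is independent in `φ`:  `(Σ_φ ↾ W) ⋈ (Σ_φ ↾ (S \ W)) = Σ_φ`. -/
def Indep {V : Type} (E S : Set V) (φ : LTL V) (W : Set V) : Prop :=
  Join E W (S \ W) (projS E W (ModelsOver E S φ)) (projS E (S \ W) (ModelsOver E S φ))
    = ModelsOver E S φ

/-- A literal: a variable together with a polarity. -/
def LTL.lit {V : Type} (p : V × Bool) : LTL V :=
  if p.2 then LTL.var p.1 else LTL.neg (LTL.var p.1)

/-- Conjunction of a list of formulae. -/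
def LTL.bigConj {V : Type} (l : List (LTL V)) : LTL V :=
  l.foldr LTL.conj LTL.tt

/-- distributivity of projection over join (as an inclusion). -/
theorem stmt6 {V : Type} (En Sy U W : Set V) (hU : U ⊆ Sy) (hW : W ⊆ Sy)
    (Sig : Set (Trace V)) (hover : TracesOver En Sy Sig) :
    projS En (U ∪ W) Sig ⊆ Join En U W (projS En U Sig) (projS En W Sig) := by
  rintro β ⟨α, hα, rfl⟩
  refine ⟨fun i => ?_, ⟨α, hα, ?_⟩, ⟨α, hα, ?_⟩⟩
  · intro v hv
    rcases hv with h | h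
    · exact Or.inl (Or.inl h.2)
    · rcases h.2 with h2 | h2
      · exact Or.inl (Or.inr h2)
      · exact Or.inr h2
  · funext i
    ext v
    simp only [projT, Set.mem_union, Set.mem_inter_iff]
    tauto
  · funext i
    ext v
    simp only [projT, Set.mem_union, Set.mem_inter_iff]
    tauto
end

section
/- Distributivity of join over projection: let W₁, W₂ ⊆ 𝓢 with W₁ ∩ W₂ = ∅, let Σ₁, Σ₂ be sets of traces over 𝓔 ∪ W₁ and 𝓔 ∪ W₂, and let X ⊆ W₁, Y ⊆ W₂. Then (Σ₁ ⋈ Σ₂) ↾ (X ∪ Y) = (Σ₁↾X) ⋈ (Σ₂↾Y). -/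
open Classical

set_option maxHeartbeats 2000000 in
/-- distributivity of join over projection. -/
theorem stmt7 {V : Type} (En Sy W₁ W₂ X Y : Set V) (hdis : Disjoint En Sy)
    (hW₁ : W₁ ⊆ Sy) (hW₂ : W₂ ⊆ Sy) (hWdis : W₁ ∩ W₂ = ∅)
    (hX : X ⊆ W₁) (hY : Y ⊆ W₂)
    (S₁ S₂ : Set (Trace V)) (h₁ : TracesOver En W₁ S₁) (h₂ : TracesOver En W₂ S₂) :
    projS En (X ∪ Y) (Join En W₁ W₂ S₁ S₂)
      = Join En X Y (projS En X S₁) (projS En Y S₂) := by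
  have hdj : ∀ v, v ∈ En → v ∈ Sy → False := fun v a b => Set.disjoint_left.mp hdis a b
  ext β
  constructor
  · rintro ⟨α, ⟨hsub, hs1, hs2⟩, rfl⟩
    refine ⟨?_, ⟨projT En W₁ α, hs1, ?_⟩, ⟨projT En W₂ α, hs2, ?_⟩⟩
    · intro i v hv
      simp [projT, Set.mem_union, Set.mem_inter_iff] at hv ⊢
      tauto
    · funext i; ext v
      have hx := @hX v
      simp [projT, Set.mem_union, Set.mem_inter_iff]
      tauto
    · funext i; ext v
      have hy := @hY v
      simp [projT, Set.mem_union, Set.mem_inter_iff]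
      tauto
  · rintro ⟨hsub, ⟨α₁, hα₁, hp1⟩, ⟨α₂, hα₂, hp2⟩⟩
    have key : ∀ i v,
        ((v ∈ α₁ i → v ∈ En ∨ v ∈ W₁) ∧ (v ∈ α₂ i → v ∈ En ∨ v ∈ W₂) ∧
         ((v ∈ α₁ i ∧ v ∈ En ↔ v ∈ β i ∧ v ∈ En) ∧ (v ∈ α₁ i ∧ v ∈ X ↔ v ∈ β i ∧ v ∈ X)) ∧
         ((v ∈ α₂ i ∧ v ∈ En ↔ v ∈ β i ∧ v ∈ En) ∧ (v ∈ α₂ i ∧ v ∈ Y ↔ v ∈ β i ∧ v ∈ Y))) := by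
      intro i v
      have e1 := Set.ext_iff.mp (congrFun hp1 i) v
      have e2 := Set.ext_iff.mp (congrFun hp2 i) v
      have hEX : v ∈ X → v ∈ En → False := fun a b => hdj v b (hW₁ (hX a))
      have hEY : v ∈ Y → v ∈ En → False := fun a b => hdj v b (hW₂ (hY a))
      simp only [projT, Set.mem_union, Set.mem_inter_iff] at e1 e2
      refine ⟨fun h => h₁ α₁ hα₁ i h, fun h => h₂ α₂ hα₂ i h, ⟨?_, ?_⟩, ⟨?_, ?_⟩⟩ <;> tauto
    have hWW : ∀ v, v ∈ W₁ → v ∈ W₂ → False := fun v a b => by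
      have : v ∈ W₁ ∩ W₂ := ⟨a, b⟩
      rw [hWdis] at this; exact this
    have hq1 : projT En W₁ (fun i => α₁ i ∪ α₂ i) = α₁ := by
      funext i; ext v
      obtain ⟨a1, a2, ⟨cE1, cX⟩, ⟨cE2, cY⟩⟩ := key i v
      simp only [projT, Set.mem_union, Set.mem_inter_iff]
      constructor
      · rintro (⟨h | h, he⟩ | ⟨h | h, hw⟩)
        · exact h
        · exact (cE1.mpr ⟨(cE2.mp ⟨h, he⟩).1, he⟩).1
        · exact h
        · rcases a2 h with he | hw2
          · exact absurd (hW₁ hw) (fun c => hdj v he c)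
          · exact absurd hw2 (hWW v hw)
      · intro h
        rcases a1 h with he | hw
        · exact Or.inl ⟨Or.inl h, he⟩
        · exact Or.inr ⟨Or.inl h, hw⟩
    have hq2 : projT En W₂ (fun i => α₁ i ∪ α₂ i) = α₂ := by
      funext i; ext v
      obtain ⟨a1, a2, ⟨cE1, cX⟩, ⟨cE2, cY⟩⟩ := key i v
      simp only [projT, Set.mem_union, Set.mem_inter_iff]
      constructor
      · rintro (⟨h | h, he⟩ | ⟨h | h, hw⟩)
        · exact (cE2.mpr ⟨(cE1.mp ⟨h, he⟩).1, he⟩).1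
        · exact h
        · rcases a1 h with he | hw1
          · exact absurd (hW₂ hw) (fun c => hdj v he c)
          · exact absurd hw (hWW v hw1)
        · exact h
      · intro h
        rcases a2 h with he | hw
        · exact Or.inl ⟨Or.inr h, he⟩
        · exact Or.inr ⟨Or.inr h, hw⟩
    refine ⟨fun i => α₁ i ∪ α₂ i, ⟨?_, by rw [hq1]; exact hα₁, by rw [hq2]; exact hα₂⟩, ?_⟩
    · intro i v hv
      obtain ⟨a1, a2, -, -⟩ := key i v
      simp only [Set.mem_union] at hv ⊢
      rcases hv with h | h
      · rcases a1 h with he | hw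
        · exact Or.inl (Or.inl he)
        · exact Or.inl (Or.inr hw)
      · rcases a2 h with he | hw
        · exact Or.inl (Or.inl he)
        · exact Or.inr hw
    · funext i; ext v
      obtain ⟨a1, a2, ⟨cE1, cX⟩, ⟨cE2, cY⟩⟩ := key i v
      have hb := @hsub i v
      simp only [Set.mem_union] at hb
      simp only [projT, Set.mem_union, Set.mem_inter_iff]
      constructor
      · rintro (⟨h | h, he⟩ | ⟨h | h, hxy⟩)
        · exact (cE1.mp ⟨h, he⟩).1
        · exact (cE2.mp ⟨h, he⟩).1
        · rcases hxy with hx | hy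
          · exact (cX.mp ⟨h, hx⟩).1
          · rcases a1 h with he | hw
            · exact absurd (hW₂ (hY hy)) (fun c => hdj v he c)
            · exact absurd (hY hy) (hWW v hw)
        · rcases hxy with hx | hy
          · rcases a2 h with he | hw
            · exact absurd (hW₁ (hX hx)) (fun c => hdj v he c)
            · exact absurd hw (hWW v (hX hx))
          · exact (cY.mp ⟨h, hy⟩).1
      · intro h
        rcases hb h with (he | hx) | hy
        · exact Or.inl ⟨Or.inl (cE1.mpr ⟨h, he⟩).1, he⟩
        · exact Or.inr ⟨Or.inl (cX.mpr ⟨h, hx⟩).1, Or.inl hx⟩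
        · exact Or.inr ⟨Or.inr (cY.mpr ⟨h, hy⟩).1, Or.inr hy⟩
end

section
/- The join commutes with unions over environment plays: (Σ_φ↾W₁) ⋈ (Σ_φ↾W₂) = ⋃_{E} (Σ^E_φ↾W₁) ⋈ (Σ^E_φ↾W₂), where the union is over all environment plays E. -/
open Classical

/-- the join commutes with unions over environment plays. -/
theorem stmt8 {V : Type} (En Sy W₁ W₂ : Set V) (hdis : Disjoint En Sy)
    (hW₁ : W₁ ⊆ Sy) (hW₂ : W₂ ⊆ Sy)
    (Sφ : Set (Trace V)) (hover : TracesOver En Sy Sφ) :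
    Join En W₁ W₂ (projS En W₁ Sφ) (projS En W₂ Sφ)
      = ⋃ (E : Trace V) (_ : ∀ i, E i ⊆ En),
          Join En W₁ W₂ (projS En W₁ {α ∈ Sφ | ∀ i, α i ∩ En = E i})
            (projS En W₂ {α ∈ Sφ | ∀ i, α i ∩ En = E i}) := by
  have key : ∀ (W : Set V), W ⊆ Sy → ∀ (δ : Trace V) (i : ℕ),
      projT En W δ i ∩ En = δ i ∩ En := by
    intro W hW δ i
    have hWE : W ∩ En = ∅ := by
      have := hdis.symm.mono_left hW
      exact Set.disjoint_iff_inter_eq_empty.mp this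
    simp only [projT, Set.union_inter_distrib_right, Set.inter_assoc, hWE,
      Set.inter_empty, Set.union_empty, Set.inter_right_comm]
    rw [Set.inter_self]
  ext α
  constructor
  · rintro ⟨hsub, ⟨β, hβ, hβeq⟩, ⟨γ, hγ, hγeq⟩⟩
    refine Set.mem_iUnion.2 ⟨fun i => α i ∩ En, Set.mem_iUnion.2
      ⟨fun i => Set.inter_subset_right, hsub, ⟨β, ⟨hβ, ?_⟩, hβeq⟩, ⟨γ, ⟨hγ, ?_⟩, hγeq⟩⟩⟩
    · intro i
      calc β i ∩ En = projT En W₁ β i ∩ En := (key W₁ hW₁ β i).symm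
        _ = projT En W₁ α i ∩ En := by rw [hβeq]
        _ = α i ∩ En := key W₁ (hW₁.trans (le_refl _)) α i
    · intro i
      calc γ i ∩ En = projT En W₂ γ i ∩ En := (key W₂ hW₂ γ i).symm
        _ = projT En W₂ α i ∩ En := by rw [hγeq]
        _ = α i ∩ En := key W₂ hW₂ α i
  · intro h
    obtain ⟨E, hE⟩ := Set.mem_iUnion.1 h
    obtain ⟨hEsub, hsub, ⟨β, hβ, hβeq⟩, ⟨γ, hγ, hγeq⟩⟩ := Set.mem_iUnion.1 hE
    exact ⟨hsub, ⟨β, hβ.1, hβeq⟩, ⟨γ, hγ.1, hγeq⟩⟩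
end

section
/- A set W ⊆ 𝓢 is independent in φ if and only if for every U ⊆ 𝓢 with U ∩ W = ∅, Σ_φ ↾ (U ∪ W) = (Σ_φ↾U) ⋈ (Σ_φ↾W). -/
open Classical

/-- `W` is independent in `φ` iff for every `U ⊆ S` disjoint from `W`,
`Σ_φ ↾ (U ∪ W) = (Σ_φ ↾ U) ⋈ (Σ_φ ↾ W)`. -/
theorem stmt9 {V : Type} (En Sy : Set V) (hdis : Disjoint En Sy)
    (Sφ : Set (Trace V)) (hover : TracesOver En Sy Sφ) (W : Set V) (hW : W ⊆ Sy) :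
    (Join En W (Sy \ W) (projS En W Sφ) (projS En (Sy \ W) Sφ) = Sφ) ↔
      (∀ U ⊆ Sy, U ∩ W = ∅ →
        projS En (U ∪ W) Sφ = Join En U W (projS En U Sφ) (projS En W Sφ)) :=
  by
  classical
  have hdE : ∀ v, v ∈ En → v ∈ Sy → False := fun v hv hv' => Set.disjoint_left.mp hdis hv hv'
  have hmem : ∀ (X : Set V) (α : Trace V) (i : ℕ) (v : V),
      v ∈ projT En X α i ↔ v ∈ α i ∧ (v ∈ En ∨ v ∈ X) := by
    intro X α i v
    simp only [projT, Set.mem_union, Set.mem_inter_iff]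
    tauto
  constructor
  · -- Indep → general statement
    intro hind U hU hUW
    have hUWdis : ∀ v, v ∈ U → v ∈ W → False := by
      intro v h1 h2
      have hv : v ∈ U ∩ W := ⟨h1, h2⟩
      rw [hUW] at hv; exact hv
    ext β
    constructor
    · rintro ⟨α, hα, rfl⟩
      have hov := hover α hα
      refine ⟨?_, ⟨α, hα, ?_⟩, ⟨α, hα, ?_⟩⟩
      · intro i v hv
        rw [hmem] at hv
        simp only [Set.mem_union] at hv ⊢
        tauto
      · funext i; ext v
        simp only [hmem, Set.mem_union]
        tauto
      · funext i; ext v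
        simp only [hmem, Set.mem_union]
        tauto
    · rintro ⟨hβ, ⟨α₁, hα₁, h1⟩, ⟨α₂, hα₂, h2⟩⟩
      have hov1 := hover α₁ hα₁
      have hov2 := hover α₂ hα₂
      have h1' : ∀ i v, (v ∈ α₁ i ∧ (v ∈ En ∨ v ∈ U)) ↔ (v ∈ β i ∧ (v ∈ En ∨ v ∈ U)) := by
        intro i v
        have := Set.ext_iff.mp (congrFun h1 i) v
        simpa only [hmem] using this
      have h2' : ∀ i v, (v ∈ α₂ i ∧ (v ∈ En ∨ v ∈ W)) ↔ (v ∈ β i ∧ (v ∈ En ∨ v ∈ W)) := by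
        intro i v
        have := Set.ext_iff.mp (congrFun h2 i) v
        simpa only [hmem] using this
      set γ : Trace V := fun i => (α₁ i ∩ (En ∪ (Sy \ W))) ∪ (β i ∩ W) with hγdef
      have hγmem : ∀ i v, v ∈ γ i ↔ (v ∈ α₁ i ∧ (v ∈ En ∨ (v ∈ Sy ∧ v ∉ W))) ∨ (v ∈ β i ∧ v ∈ W) := by
        intro i v
        simp only [hγdef, Set.mem_union, Set.mem_inter_iff, Set.mem_diff]
      have hγ : γ ∈ Sφ := by
        rw [← hind]
        refine ⟨?_, ⟨α₂, hα₂, ?_⟩, ⟨α₁, hα₁, ?_⟩⟩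
        · intro i v hv
          rw [hγmem] at hv
          simp only [Set.mem_union, Set.mem_diff]
          rcases hv with ⟨hv, hE | ⟨hS, hnW⟩⟩ | ⟨hv, hWv⟩
          · exact Or.inl (Or.inl hE)
          · exact Or.inr ⟨hS, hnW⟩
          · exact Or.inl (Or.inr hWv)
        · -- projT En W α₂ = projT En W γ
          funext i; ext v
          simp only [hmem, hγmem]
          constructor
          · rintro ⟨hv, hEW⟩
            have := (h2' i v).mp ⟨hv, hEW⟩
            rcases hEW with hE | hWv
            · exact ⟨Or.inl ⟨((h1' i v).mpr ⟨this.1, Or.inl hE⟩).1, Or.inl hE⟩, Or.inl hE⟩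
            · exact ⟨Or.inr ⟨this.1, hWv⟩, Or.inr hWv⟩
          · rintro ⟨hv, hEW⟩
            rcases hv with ⟨hv1, hE | ⟨hS, hnW⟩⟩ | ⟨hvb, hWv⟩
            · -- v ∈ α₁ i, v ∈ En : then v ∈ β i, then v ∈ α₂ i
              have hvb := ((h1' i v).mp ⟨hv1, Or.inl hE⟩).1
              exact ⟨((h2' i v).mpr ⟨hvb, Or.inl hE⟩).1, hEW⟩
            · -- v ∈ Sy \ W but hEW says v ∈ En ∨ v ∈ W : contradiction
              rcases hEW with hE | hWv
              · exact absurd hS (fun h => hdE v hE h)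
              · exact absurd hWv hnW
            · exact ⟨((h2' i v).mpr ⟨hvb, Or.inr hWv⟩).1, hEW⟩
        · -- projT En (Sy \ W) α₁ = projT En (Sy \ W) γ
          funext i; ext v
          simp only [hmem, hγmem, Set.mem_diff]
          constructor
          · rintro ⟨hv, hE | ⟨hS, hnW⟩⟩
            · exact ⟨Or.inl ⟨hv, Or.inl hE⟩, Or.inl hE⟩
            · exact ⟨Or.inl ⟨hv, Or.inr ⟨hS, hnW⟩⟩, Or.inr ⟨hS, hnW⟩⟩
          · rintro ⟨hv, hESW⟩
            rcases hv with ⟨hv1, _⟩ | ⟨hvb, hWv⟩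
            · exact ⟨hv1, hESW⟩
            · rcases hESW with hE | ⟨hS, hnW⟩
              · -- v ∈ β i, v ∈ En : v ∈ α₁ i
                exact ⟨((h1' i v).mpr ⟨hvb, Or.inl hE⟩).1, Or.inl hE⟩
              · exact absurd hWv hnW
      refine ⟨γ, hγ, ?_⟩
      funext i; ext v
      simp only [hmem, hγmem, Set.mem_union]
      constructor
      · rintro ⟨hv, hEUW⟩
        rcases hv with ⟨hv1, hE | ⟨hS, hnW⟩⟩ | ⟨hvb, hWv⟩
        · exact ((h1' i v).mp ⟨hv1, Or.inl hE⟩).1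
        · -- v ∈ α₁ i ∩ (Sy \ W), and v ∈ En ∨ v ∈ U ∨ v ∈ W
          rcases hEUW with hE | hUv | hWv
          · exact absurd hS (fun h => hdE v hE h)
          · exact ((h1' i v).mp ⟨hv1, Or.inr hUv⟩).1
          · exact absurd hWv hnW
        · exact hvb
      · intro hvb
        have hEUW : v ∈ En ∨ v ∈ U ∨ v ∈ W := by
          have := hβ i hvb
          simp only [Set.mem_union] at this
          tauto
        refine ⟨?_, hEUW⟩
        rcases hEUW with hE | hUv | hWv
        · exact Or.inl ⟨((h1' i v).mpr ⟨hvb, Or.inl hE⟩).1, Or.inl hE⟩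
        · have hv1 := ((h1' i v).mpr ⟨hvb, Or.inr hUv⟩).1
          have hS : v ∈ Sy := hU hUv
          by_cases hWv : v ∈ W
          · exact Or.inr ⟨hvb, hWv⟩
          · exact Or.inl ⟨hv1, Or.inr ⟨hS, hWv⟩⟩
        · exact Or.inr ⟨hvb, hWv⟩
  · -- general statement → Indep
    intro h
    have key := h (Sy \ W) Set.diff_subset (Set.diff_inter_self)
    have hid : projS En (Sy \ W ∪ W) Sφ = Sφ := by
      ext β
      constructor
      · rintro ⟨α, hα, rfl⟩
        have hov := hover α hα
        have : projT En (Sy \ W ∪ W) α = α := by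
          funext i; ext v
          simp only [hmem, Set.mem_union, Set.mem_diff]
          constructor
          · exact fun h => h.1
          · intro hv
            refine ⟨hv, ?_⟩
            have := hov i hv
            simp only [Set.mem_union] at this
            tauto
        rw [this]; exact hα
      · intro hβ
        refine ⟨β, hβ, ?_⟩
        have hov := hover β hβ
        funext i; ext v
        simp only [hmem, Set.mem_union, Set.mem_diff]
        constructor
        · exact fun h => h.1
        · intro hv
          refine ⟨hv, ?_⟩
          have := hov i hv
          simp only [Set.mem_union] at this
          by_cases hWv : v ∈ W
          · tauto
          · tauto
    rw [hid] at key
    have swap : Join En W (Sy \ W) (projS En W Sφ) (projS En (Sy \ W) Sφ)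
        = Join En (Sy \ W) W (projS En (Sy \ W) Sφ) (projS En W Sφ) := by
      ext β
      simp only [Join, Set.mem_setOf_eq]
      constructor
      · rintro ⟨h1, h2, h3⟩
        refine ⟨fun i v hv => ?_, h3, h2⟩
        have := h1 i hv
        simp only [Set.mem_union] at this ⊢
        tauto
      · rintro ⟨h1, h2, h3⟩
        refine ⟨fun i v hv => ?_, h3, h2⟩
        have := h1 i hv
        simp only [Set.mem_union] at this ⊢
        tauto
    rw [swap]
    exact key.symm
end

section
/- Let φ be an LTL formula and U, W ⊆ 𝓢 with U ∩ W = ∅. If a trace α (over primed and unprimed variables) models both projection formulae φ′_U and φ′_W, then α↾(U ∪ W) ∈ (Σ_φ↾U) ⋈ (Σ_φ↾W). -/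
open Classical

theorem Sat_rename {V : Type} (f : V → V) (φ : LTL V) :
    ∀ α : Trace V, Sat α (φ.rename f) ↔ Sat (fun i => {v | f v ∈ α i}) φ := by
  induction φ with
  | tt => intro α; exact Iff.rfl
  | var v => intro α; exact Iff.rfl
  | neg φ ih => intro α; exact Iff.not (ih α)
  | conj φ ψ ih1 ih2 => intro α; exact and_congr (ih1 α) (ih2 α)
  | next φ ih => intro α; exact ih (α.shift 1)
  | untl φ ψ ih1 ih2 =>
    intro α
    constructor
    · rintro ⟨k, hk, hj⟩
      exact ⟨k, (ih2 (α.shift k)).mp hk, fun j hj' => (ih1 (α.shift j)).mp (hj j hj')⟩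
    · rintro ⟨k, hk, hj⟩
      exact ⟨k, (ih2 (α.shift k)).mpr hk, fun j hj' => (ih1 (α.shift j)).mpr (hj j hj')⟩

theorem Sat_congr {V : Type} (φ : LTL V) :
    ∀ α β : Trace V, (∀ i v, v ∈ φ.vars → (v ∈ α i ↔ v ∈ β i)) →
      (Sat α φ ↔ Sat β φ) := by
  induction φ with
  | tt => intro α β _; exact Iff.rfl
  | var v => intro α β h; exact h 0 v rfl
  | neg φ ih => intro α β h; exact Iff.not (ih α β h)
  | conj φ ψ ih1 ih2 =>
    intro α β h
    exact and_congr (ih1 α β fun i v hv => h i v (Or.inl hv))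
      (ih2 α β fun i v hv => h i v (Or.inr hv))
  | next φ ih =>
    intro α β h
    exact ih (α.shift 1) (β.shift 1) fun i v hv => h (i + 1) v hv
  | untl φ ψ ih1 ih2 =>
    intro α β h
    have h1 : ∀ k, Sat (α.shift k) φ ↔ Sat (β.shift k) φ := fun k =>
      ih1 (α.shift k) (β.shift k) fun i v hv => h (i + k) v (Or.inl hv)
    have h2 : ∀ k, Sat (α.shift k) ψ ↔ Sat (β.shift k) ψ := fun k =>
      ih2 (α.shift k) (β.shift k) fun i v hv => h (i + k) v (Or.inr hv)
    constructor
    · rintro ⟨k, hk, hj⟩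
      exact ⟨k, (h2 k).mp hk, fun j hj' => (h1 j).mp (hj j hj')⟩
    · rintro ⟨k, hk, hj⟩
      exact ⟨k, (h2 k).mpr hk, fun j hj' => (h1 j).mpr (hj j hj')⟩

theorem key_witness {V : Type} (En Sy : Set V) (hdis : Disjoint En Sy)
    (prime : V → V)
    (φ : LTL V) (hvars : φ.vars ⊆ En ∪ Sy)
    (U W X Y : Set V) (hU : U ⊆ Sy) (hW : W ⊆ Sy)
    (hX : X ⊆ Sy) (hY : Y ⊆ Sy) (hXY : X ∩ Y = ∅) (hYUW : Y ⊆ U ∪ W)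
    (α : Trace V) (hsat : Sat α (projFormula prime X φ)) :
    projT En Y (projT En (U ∪ W) α) ∈ projS En Y (ModelsOver En Sy φ) := by
  classical
  set f : V → V := fun v => if v ∈ X then prime v else v with hf
  set β : Trace V := fun i => {v | f v ∈ α i} ∩ (En ∪ Sy) with hβ
  refine ⟨β, ⟨?_, fun i => Set.inter_subset_right⟩, ?_⟩
  · -- Sat β φ
    have h1 : Sat (fun i => {v | f v ∈ α i}) φ := (Sat_rename f φ α).mp hsat
    refine (Sat_congr φ _ β ?_).mp h1
    intro i v hv
    have hvES : v ∈ En ∪ Sy := hvars hv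
    simp only [hβ, Set.mem_inter_iff, Set.mem_setOf_eq, hvES, and_true]
  · -- projections agree
    funext i
    ext v
    by_cases hvE : v ∈ En
    · have hvS : v ∉ Sy := fun h => Set.disjoint_left.mp hdis hvE h
      have hvX : v ∉ X := fun h => hvS (hX h)
      have hvY : v ∉ Y := fun h => hvS (hY h)
      have hvU : v ∉ U := fun h => hvS (hU h)
      have hvW : v ∉ W := fun h => hvS (hW h)
      simp only [projT, hβ, hf, Set.mem_union, Set.mem_inter_iff,
        Set.mem_setOf_eq, if_neg hvX]
      tauto
    · by_cases hvY : v ∈ Y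
      · have hvX : v ∉ X := by
          intro h
          have : v ∈ X ∩ Y := ⟨h, hvY⟩
          rw [hXY] at this
          exact this
        have hvUW : v ∈ U ∪ W := hYUW hvY
        have hvES : v ∈ En ∪ Sy := Or.inr (hY hvY)
        simp only [projT, hβ, hf, Set.mem_union, Set.mem_inter_iff,
          Set.mem_setOf_eq, if_neg hvX]
        rcases hvUW with h | h <;> rcases hvES with h' | h' <;> tauto
      · simp only [projT, hβ, hf, Set.mem_union, Set.mem_inter_iff,
          Set.mem_setOf_eq]
        tauto

/-- if `α ⊨ φ′_U ∧ φ′_W` (with `U ∩ W = ∅`), then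
`α ↾ (U ∪ W) ∈ (Σ_φ ↾ U) ⋈ (Σ_φ ↾ W)`. -/
theorem stmt10 {V : Type} (En Sy : Set V) (hdis : Disjoint En Sy)
    (prime : V → V) (hinj : Function.Injective prime)
    (hfresh : ∀ v, prime v ∉ En ∪ Sy)
    (φ : LTL V) (hvars : φ.vars ⊆ En ∪ Sy)
    (U W : Set V) (hU : U ⊆ Sy) (hW : W ⊆ Sy) (hUW : U ∩ W = ∅)
    (α : Trace V)
    (hα : Sat α ((projFormula prime U φ).conj (projFormula prime W φ))) :
    projT En (U ∪ W) α ∈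
      Join En U W (projS En U (ModelsOver En Sy φ)) (projS En W (ModelsOver En Sy φ)) := by
  obtain ⟨hSatU, hSatW⟩ := hα
  have hWU : W ∩ U = ∅ := by rw [Set.inter_comm]; exact hUW
  refine ⟨fun i v hv => ?_,
    key_witness En Sy hdis prime φ hvars U W W U hU hW hW hU hWU
      Set.subset_union_left α hSatW,
    key_witness En Sy hdis prime φ hvars U W U W hU hW hU hW hUW
      Set.subset_union_right α hSatU⟩
  rcases hv with ⟨_, h⟩ | ⟨_, h⟩
  · exact Or.inl (Or.inl h)
  · rcases h with h | h
    · exact Or.inl (Or.inr h)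
    · exact Or.inr h
end

section
/- Let U, W ⊆ 𝓢 with U ∩ W = ∅ and let φ be an LTL formula. If some trace α models φ′_U ∧ φ′_W, then there exists an extension α̂ of α modeling φ′_U ∧ φ′_{𝓢∖U}. -/
open Classical

lemma sat_congr {V : Type} (f g : V → V) (φ : LTL V) :
    ∀ (α β : Trace V), (∀ v ∈ φ.vars, ∀ i, f v ∈ β i ↔ g v ∈ α i) →
    (Sat β (φ.rename f) ↔ Sat α (φ.rename g)) := by
  induction φ with
  | tt => intro α β h; simp [LTL.rename, Sat]
  | var v =>
    intro α β h
    simp only [LTL.rename, Sat]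
    exact h v (by simp [LTL.vars]) 0
  | neg φ ih =>
    intro α β h
    simp only [LTL.rename, Sat]
    exact not_congr (ih α β (fun v hv => h v hv))
  | conj φ ψ ih1 ih2 =>
    intro α β h
    simp only [LTL.rename, Sat]
    exact and_congr (ih1 α β (fun v hv => h v (Or.inl hv)))
      (ih2 α β (fun v hv => h v (Or.inr hv)))
  | next φ ih =>
    intro α β h
    simp only [LTL.rename, Sat]
    exact ih (α.shift 1) (β.shift 1) (fun v hv i => h v hv (i + 1))
  | untl φ ψ ih1 ih2 =>
    intro α β h
    simp only [LTL.rename, Sat]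
    constructor
    · rintro ⟨k, hk, hj⟩
      exact ⟨k, (ih2 (α.shift k) (β.shift k) (fun v hv i => h v (Or.inr hv) (i + k))).mp hk,
        fun j hjk => (ih1 (α.shift j) (β.shift j) (fun v hv i => h v (Or.inl hv) (i + j))).mp (hj j hjk)⟩
    · rintro ⟨k, hk, hj⟩
      exact ⟨k, (ih2 (α.shift k) (β.shift k) (fun v hv i => h v (Or.inr hv) (i + k))).mpr hk,
        fun j hjk => (ih1 (α.shift j) (β.shift j) (fun v hv i => h v (Or.inl hv) (i + j))).mpr (hj j hjk)⟩

/-- if some trace models `φ′_U ∧ φ′_W` (with `U ∩ W = ∅`), then some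
extension of it models `φ′_U ∧ φ′_{S∖U}`. -/
theorem stmt12 {V : Type} (En Sy : Set V) (hdis : Disjoint En Sy)
    (prime : V → V) (hinj : Function.Injective prime)
    (hfresh : ∀ v, prime v ∉ En ∪ Sy)
    (φ : LTL V) (hvars : φ.vars ⊆ En ∪ Sy)
    (U W : Set V) (hU : U ⊆ Sy) (hW : W ⊆ Sy) (hUW : U ∩ W = ∅)
    (α : Trace V)
    (hα : Sat α ((projFormula prime U φ).conj (projFormula prime W φ))) :
    ∃ αhat : Trace V,
      (∀ i, ∀ v, v ∉ prime '' (Sy \ (U ∪ W)) → (v ∈ αhat i ↔ v ∈ α i)) ∧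
      Sat αhat ((projFormula prime U φ).conj (projFormula prime (Sy \ U) φ)) := by
  classical
  set P : Set V := prime '' (Sy \ (U ∪ W)) with hP
  set αhat : Trace V := fun i => (α i \ P) ∪ {x | ∃ y, y ∈ Sy \ (U ∪ W) ∧ x = prime y ∧ y ∈ α i} with hαhat
  have hnotP : ∀ v ∈ En ∪ Sy, v ∉ P := by
    rintro v hv ⟨y, hy, rfl⟩
    exact hfresh y hv
  have hsame : ∀ i, ∀ v, v ∉ P → (v ∈ αhat i ↔ v ∈ α i) := by
    intro i v hv
    simp only [hαhat, Set.mem_union, Set.mem_diff, Set.mem_setOf_eq]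
    constructor
    · rintro (⟨h1, _⟩ | ⟨y, hy, rfl, _⟩)
      · exact h1
      · exact absurd ⟨y, hy, rfl⟩ hv
    · intro h; exact Or.inl ⟨h, hv⟩
  have hprimeval : ∀ i, ∀ y ∈ Sy \ (U ∪ W), (prime y ∈ αhat i ↔ y ∈ α i) := by
    intro i y hy
    simp only [hαhat, Set.mem_union, Set.mem_diff, Set.mem_setOf_eq]
    constructor
    · rintro (⟨_, hn⟩ | ⟨z, hz, hz2, hz3⟩)
      · exact absurd ⟨y, hy, rfl⟩ hn
      · rw [hinj hz2]; exact hz3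
    · intro h; exact Or.inr ⟨y, hy, rfl, h⟩
  refine ⟨αhat, hsame, ?_, ?_⟩
  · -- Sat αhat (projFormula prime U φ)
    have := (sat_congr (fun v => if v ∈ U then prime v else v)
      (fun v => if v ∈ U then prime v else v) φ α αhat ?_).mpr hα.1
    · simpa only [projFormula] using this
    · intro v hv i
      have hvE : v ∈ En ∪ Sy := hvars hv
      by_cases hvU : v ∈ U
      · simp only [if_pos hvU]
        apply hsame
        rintro ⟨y, hy, hyeq⟩
        exact absurd (hU hvU) (by rw [← hinj hyeq] at hvU; exact fun _ => hy.2 (Or.inl hvU))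
      · simp only [if_neg hvU]
        exact hsame i v (hnotP v hvE)
  · -- Sat αhat (projFormula prime (Sy \ U) φ)
    have := (sat_congr (fun v => if v ∈ Sy \ U then prime v else v)
      (fun v => if v ∈ W then prime v else v) φ α αhat ?_).mpr hα.2
    · simp only [projFormula]
      convert this using 2
      funext v; by_cases h : v ∈ Sy \ U <;> simp [h]
    · intro v hv i
      have hvE : v ∈ En ∪ Sy := hvars hv
      by_cases hvSU : v ∈ Sy \ U
      · simp only [if_pos hvSU]
        by_cases hvW : v ∈ W
        · simp only [if_pos hvW]
          apply hsame
          rintro ⟨y, hy, hyeq⟩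
          exact hy.2 (Or.inr (by rwa [← hinj hyeq] at hvW))
        · simp only [if_neg hvW]
          rw [hprimeval i v ⟨hvSU.1, fun h => h.elim hvSU.2 hvW⟩]
      · have hvU : v ∉ W := by
          intro hvW
          exact hvSU ⟨hW hvW, fun hvU => Set.eq_empty_iff_forall_notMem.mp hUW v ⟨hvU, hvW⟩⟩
        simp only [if_neg hvSU, if_neg hvU]
        exact hsame i v (hnotP v hvE)
end

section
/- Minimality propagates through the join: if for all nonempty proper subsets V ⊂ W we have Σ_φ↾W ≠ (Σ_φ↾V) ⋈ (Σ_φ↾(W∖V)), and additionally (Σ_φ↾W) ⋈ (Σ_φ↾{z}) ≠ Σ_φ↾(W ∪ {z}) for z ∉ W, then for every subset of the form Y ∪ {z} with Y ⊂ W it holds that Σ_φ↾(W ∪ {z}) ≠ (Σ_φ↾(Y ∪ {z})) ⋈ (Σ_φ↾(W∖Y)). -/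
open Classical

lemma projT_projT {V : Type} (E W₁ W₂ : Set V) (α : Trace V) :
    projT E W₂ (projT E W₁ α) = projT E (W₁ ∩ W₂) α := by
  funext i
  ext x
  simp only [projT, Set.mem_union, Set.mem_inter_iff]
  tauto

lemma projS_projS {V : Type} (E W₁ W₂ : Set V) (S : Set (Trace V)) :
    projS E W₂ (projS E W₁ S) = projS E (W₁ ∩ W₂) S := by
  unfold projS
  rw [Set.image_image]
  exact Set.image_congr' (fun α => projT_projT E W₁ W₂ α)

lemma join_comm {V : Type} (E A B : Set V) (S T : Set (Trace V)) :
    Join E A B S T = Join E B A T S := by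
  ext α
  simp only [Join, Set.mem_setOf_eq, Set.union_right_comm E A B]
  tauto

lemma key_lemma {V : Type} (En : Set V) (Sig : Set (Trace V)) (Y W : Set V) (z : V)
    (hYW : Y ⊆ W) (hzW : z ∉ W) (hzE : z ∉ En) :
    projS En W (Join En (Y ∪ {z}) (W \ Y)
        (projS En (Y ∪ {z}) Sig) (projS En (W \ Y) Sig))
      = Join En Y (W \ Y) (projS En Y Sig) (projS En (W \ Y) Sig) := by
  have hWY : W ∩ Y = Y := Set.inter_eq_right.mpr hYW
  have hYzY : (Y ∪ {z}) ∩ Y = Y := Set.inter_eq_right.mpr Set.subset_union_left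
  have hWWY : W ∩ (W \ Y) = W \ Y := Set.inter_eq_right.mpr Set.diff_subset
  ext β
  constructor
  · rintro ⟨α, ⟨hsub, hA, hB⟩, rfl⟩
    refine ⟨?_, ?_, ?_⟩
    · intro i x hx
      rcases hx with ⟨hx, hE⟩ | ⟨hx, hW⟩
      · exact Or.inl (Or.inl hE)
      · by_cases hY : x ∈ Y
        · exact Or.inl (Or.inr hY)
        · exact Or.inr ⟨hW, hY⟩
    · obtain ⟨δ, hδ, hδe⟩ := hA
      refine ⟨δ, hδ, ?_⟩
      have h1 : projT En Y (projT En (Y ∪ {z}) δ) = projT En Y (projT En (Y ∪ {z}) α) :=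
        congrArg (projT En Y) hδe
      rw [projT_projT, projT_projT, hYzY] at h1
      rw [projT_projT, hWY]
      exact h1
    · rw [projT_projT, hWWY]
      exact hB
  · rintro ⟨hsub, ⟨δ, hδmem, hδe⟩, hB⟩
    -- extend β with the z-component of δ
    set α : Trace V := fun i => β i ∪ (δ i ∩ {z}) with hα
    have hβEW : ∀ i, ∀ x ∈ β i, x ∈ En ∨ x ∈ W := by
      intro i x hx
      rcases hsub i hx with (h | h) | ⟨h, _⟩
      · exact Or.inl h
      · exact Or.inr (hYW h)
      · exact Or.inr h
    have hδeq : ∀ i x, (x ∈ δ i ∧ x ∈ En ∨ x ∈ δ i ∧ x ∈ Y) ↔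
        (x ∈ β i ∧ x ∈ En ∨ x ∈ β i ∧ x ∈ Y) := by
      intro i x
      have := congrFun hδe i
      have hx := Set.ext_iff.mp this x
      simpa [projT, Set.mem_union, Set.mem_inter_iff] using hx
    have hzY : z ∉ Y := fun h => hzW (hYW h)
    have hproj : projT En W α = β := by
      funext i; ext x
      have h1 := hβEW i x
      simp only [projT, hα, Set.mem_union, Set.mem_inter_iff, Set.mem_singleton_iff]
      constructor
      · rintro (⟨hb | ⟨hd, rfl⟩, hE⟩ | ⟨hb | ⟨hd, rfl⟩, hW⟩)
        · exact hb
        · exact absurd hE hzE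
        · exact hb
        · exact absurd hW hzW
      · intro hb
        rcases h1 hb with hE | hW
        · exact Or.inl ⟨Or.inl hb, hE⟩
        · exact Or.inr ⟨Or.inl hb, hW⟩
    refine ⟨α, ⟨?_, ?_, ?_⟩, hproj⟩
    · intro i x hx
      rcases hx with hb | ⟨hd, hz'⟩
      · rcases hβEW i x hb with hE | hW
        · exact Or.inl (Or.inl hE)
        · by_cases hY : x ∈ Y
          · exact Or.inl (Or.inr (Or.inl hY))
          · exact Or.inr ⟨hW, hY⟩
      · exact Or.inl (Or.inr (Or.inr hz'))
    · refine ⟨δ, hδmem, ?_⟩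
      funext i; ext x
      have h1 := hβEW i x
      have h2 := hδeq i x
      simp only [projT, hα, Set.mem_union, Set.mem_inter_iff, Set.mem_singleton_iff]
      constructor
      · rintro (⟨hd, hE⟩ | ⟨hd, hY | rfl⟩)
        · have : x ∈ β i ∧ x ∈ En ∨ x ∈ β i ∧ x ∈ Y := h2.mp (Or.inl ⟨hd, hE⟩)
          rcases this with ⟨hb, hE'⟩ | ⟨hb, hY'⟩
          · exact Or.inl ⟨Or.inl hb, hE'⟩
          · exact Or.inr ⟨Or.inl hb, Or.inl hY'⟩
        · have : x ∈ β i ∧ x ∈ En ∨ x ∈ β i ∧ x ∈ Y := h2.mp (Or.inr ⟨hd, hY⟩)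
          rcases this with ⟨hb, hE'⟩ | ⟨hb, hY'⟩
          · exact Or.inl ⟨Or.inl hb, hE'⟩
          · exact Or.inr ⟨Or.inl hb, Or.inl hY'⟩
        · exact Or.inr ⟨Or.inr ⟨hd, rfl⟩, Or.inr rfl⟩
      · rintro (⟨hb | ⟨hd, hxz⟩, hE⟩ | ⟨hb | ⟨hd, hxz⟩, hY | hxz2⟩)
        · have : x ∈ δ i ∧ x ∈ En ∨ x ∈ δ i ∧ x ∈ Y := h2.mpr (Or.inl ⟨hb, hE⟩)
          rcases this with ⟨hd, hE'⟩ | ⟨hd, hY'⟩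
          · exact Or.inl ⟨hd, hE'⟩
          · exact Or.inr ⟨hd, Or.inl hY'⟩
        · exact absurd hE (hxz ▸ hzE)
        · have : x ∈ δ i ∧ x ∈ En ∨ x ∈ δ i ∧ x ∈ Y := h2.mpr (Or.inr ⟨hb, hY⟩)
          rcases this with ⟨hd, hE'⟩ | ⟨hd, hY'⟩
          · exact Or.inl ⟨hd, hE'⟩
          · exact Or.inr ⟨hd, Or.inl hY'⟩
        · rcases hβEW i x hb with hE | hW
          · exact absurd hE (hxz2 ▸ hzE)
          · exact absurd hW (hxz2 ▸ hzW)
        · exact absurd hY (hxz ▸ hzY)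
        · exact Or.inr ⟨hd, Or.inr hxz⟩
    · have : projT En (W \ Y) α = projT En (W \ Y) β := by
        funext i; ext x
        simp only [projT, hα, Set.mem_union, Set.mem_inter_iff, Set.mem_singleton_iff,
          Set.mem_diff]
        constructor
        · rintro (⟨hb | ⟨hd, rfl⟩, hE⟩ | ⟨hb | ⟨hd, rfl⟩, hW, hY⟩)
          · exact Or.inl ⟨hb, hE⟩
          · exact absurd hE hzE
          · exact Or.inr ⟨hb, hW, hY⟩
          · exact absurd hW hzW
        · rintro (⟨hb, hE⟩ | ⟨hb, hW, hY⟩)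
          · exact Or.inl ⟨Or.inl hb, hE⟩
          · exact Or.inr ⟨Or.inl hb, hW, hY⟩
      rw [this]
      exact hB

/-- minimality propagates through the join. -/
theorem stmt19 {V : Type} (En Sy : Set V) (hdis : Disjoint En Sy)
    (φ : LTL V) (hvars : φ.vars ⊆ En ∪ Sy)
    (W : Set V) (hW : W ⊆ Sy) (z : V) (hzS : z ∈ Sy) (hz : z ∉ W)
    (hmin : ∀ U : Set V, U ⊂ W → U.Nonempty →
      projS En W (ModelsOver En Sy φ) ≠
        Join En U (W \ U) (projS En U (ModelsOver En Sy φ))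
          (projS En (W \ U) (ModelsOver En Sy φ)))
    (hzdep : Join En W {z} (projS En W (ModelsOver En Sy φ))
        (projS En {z} (ModelsOver En Sy φ))
      ≠ projS En (W ∪ {z}) (ModelsOver En Sy φ)) :
    ∀ Y : Set V, Y ⊂ W →
      projS En (W ∪ {z}) (ModelsOver En Sy φ) ≠
        Join En (Y ∪ {z}) (W \ Y) (projS En (Y ∪ {z}) (ModelsOver En Sy φ))
          (projS En (W \ Y) (ModelsOver En Sy φ)) := by
  intro Y hYss heq
  have hYW : Y ⊆ W := hYss.subset
  have hzE : z ∉ En := fun h => (Set.disjoint_left.mp hdis h) hzS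
  rcases Y.eq_empty_or_nonempty with rfl | hne
  · apply hzdep
    simp only [Set.empty_union, Set.diff_empty] at heq
    rw [join_comm]
    exact heq.symm
  · apply hmin Y hYss hne
    have h1 : projS En W (ModelsOver En Sy φ)
        = projS En W (projS En (W ∪ {z}) (ModelsOver En Sy φ)) := by
      rw [projS_projS, Set.inter_eq_right.mpr Set.subset_union_left]
    rw [h1, heq, key_lemma En (ModelsOver En Sy φ) Y W z hYW hz hzE]
end
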